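/- Let B be an R-module with bounded S-torsion, i.e., there exists r ∈ S with r·Γ_S(B) = 0. Then: (d) the natural map λ_{S,B} induces an isomorphism Γ_S(B) ≅ Γ_S(Λ_S(B)); (e) there is a short exact sequence 0 → Γ_S(B) → Λ_S(B) → Λ_S(B/Γ_S(B)) → 0. -/

import Mathlib

open Submodule

/-- The submodule `s·A` of an `R`-module `A`. -/
def smulTop (R : Type) [CommRing R] (s : R)
    (A : Type) [AddCommGroup A] [Module R A] : Submodule R A :=
  Ideal.span {s} • (⊤ : Submodule R A)

/-- The natural projection `A/tA → A/sA` when `s ∣ t`. -/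
def transMap (R : Type) [CommRing R]
    (A : Type) [AddCommGroup A] [Module R A] (s t : R) (h : s ∣ t) :
    (A ⧸ smulTop R t A) →ₗ[R] A ⧸ smulTop R s A :=
  Submodule.mapQ _ _ LinearMap.id (by
    rw [Submodule.comap_id]
    exact Submodule.smul_mono (Ideal.span_singleton_le_span_singleton.mpr h) le_rfl)

/-- The S-completion `Λ_S(A) = lim_{s ∈ S} A/sA`, realized as the submodule of compatible
families in `∏_{s ∈ S} A/sA`. -/
def sCompletion (R : Type) [CommRing R] (S : Submonoid R)
    (A : Type) [AddCommGroup A] [Module R A] :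
    Submodule R (∀ s : S, A ⧸ smulTop R (s : R) A) where
  carrier := {x | ∀ (s t : S) (h : (s : R) ∣ (t : R)), transMap R A s t h (x t) = x s}
  add_mem' := by
    intro x y hx hy s t h
    rw [Pi.add_apply, Pi.add_apply, map_add, hx s t h, hy s t h]
  zero_mem' := by
    intro s t h
    rw [Pi.zero_apply, Pi.zero_apply, map_zero]
  smul_mem' := by
    intro r x hx s t h
    rw [Pi.smul_apply, Pi.smul_apply, map_smul, hx s t h]

theorem mem_sCompletion (R : Type) [CommRing R] (S : Submonoid R)
    (A : Type) [AddCommGroup A] [Module R A]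
    (x : ∀ s : S, A ⧸ smulTop R (s : R) A) :
    x ∈ sCompletion R S A ↔
      ∀ (s t : S) (h : (s : R) ∣ (t : R)), transMap R A s t h (x t) = x s :=
  Iff.rfl

/-- The natural map `λ_{S,A} : A → Λ_S(A)`. -/
def lamMap (R : Type) [CommRing R] (S : Submonoid R)
    (A : Type) [AddCommGroup A] [Module R A] :
    A →ₗ[R] sCompletion R S A :=
  LinearMap.codRestrict (sCompletion R S A)
    (LinearMap.pi fun s : S => (smulTop R (s : R) A).mkQ)
    (by
      intro a s t h
      show transMap R A s t h ((smulTop R (t : R) A).mkQ a) = (smulTop R (s : R) A).mkQ a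
      simp only [transMap, Submodule.mkQ_apply, Submodule.mapQ_apply, LinearMap.id_apply])

/-- The map `A/sA → B/sB` induced by `f : A → B`. -/
def quotMapF (R : Type) [CommRing R]
    (A B : Type) [AddCommGroup A] [Module R A] [AddCommGroup B] [Module R B]
    (f : A →ₗ[R] B) (s : R) :
    (A ⧸ smulTop R s A) →ₗ[R] B ⧸ smulTop R s B :=
  Submodule.mapQ _ _ f (by
    rw [← Submodule.map_le_iff_le_comap, smulTop, Submodule.map_smul'']
    exact Submodule.smul_mono le_rfl le_top)

/-- The map `Λ_S(A) → Λ_S(B)` induced by `f : A → B`. -/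
def sCompletionMap (R : Type) [CommRing R] (S : Submonoid R)
    (A B : Type) [AddCommGroup A] [Module R A] [AddCommGroup B] [Module R B]
    (f : A →ₗ[R] B) :
    sCompletion R S A →ₗ[R] sCompletion R S B :=
  LinearMap.codRestrict (sCompletion R S B)
    ((LinearMap.pi fun s : S => (quotMapF R A B f (s : R)).comp (LinearMap.proj s)).comp
      (sCompletion R S A).subtype)
    (by
      rintro ⟨x, hx⟩ s t h
      obtain ⟨a, ha⟩ := Submodule.mkQ_surjective (smulTop R (t : R) A) (x t)
      have hs : x s = Submodule.Quotient.mk a := by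
        rw [← hx s t h, ← ha]
        simp only [transMap, Submodule.mkQ_apply, Submodule.mapQ_apply, LinearMap.id_apply]
      show transMap R B s t h (quotMapF R A B f (t : R) (x t)) = quotMapF R A B f (s : R) (x s)
      rw [← ha, hs]
      simp only [transMap, quotMapF, Submodule.mkQ_apply, Submodule.mapQ_apply,
        LinearMap.id_apply])

/-!
If `r ∈ S` kills `Γ_S(B)`, then `Γ_S(B) ∩ rB = 0`, since `s • r • b = 0` makes `b` torsion.
For any submodule `N` with `N ∩ rB = 0`, the system `N/(N ∩ tB)` is constant, equal to `N`,
along the cofinal family `t ∈ rS`. Hence an element of `Λ_S(B)` all of whose components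
come from `N` is `λ(n)` for a single `n ∈ N`; this identifies the kernel of
`Λ_S(B) → Λ_S(B/N)` with `λ(N)`, and lets one correct lifts of a compatible family of
`Λ_S(B/N)` by elements of `N` so that they become compatible, giving surjectivity.
Finally the components of an `S`-torsion element of `Λ_S(B)` come from `Γ_S(B)`.
-/

theorem Submodule.map_torsion'_le {R M N : Type*} [CommSemiring R] [AddCommMonoid M]
    [Module R M] [AddCommMonoid N] [Module R N] (S : Submonoid R) (f : M →ₗ[R] N) :
    (torsion' R M S).map f ≤ torsion' R N S := by
  rintro _ ⟨x, ⟨s, hs⟩, rfl⟩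
  exact ⟨s, by rw [← LinearMap.map_smul_of_tower, hs, map_zero]⟩

section smulTop

variable {R : Type} [CommRing R] {A : Type} [AddCommGroup A] [Module R A]

theorem mem_smulTop {s : R} {x : A} : x ∈ smulTop R s A ↔ ∃ b : A, s • b = x := by
  simp [smulTop, ideal_span_singleton_smul, mem_smul_pointwise_iff_exists]

theorem smul_mem_smulTop (s : R) (b : A) : s • b ∈ smulTop R s A :=
  mem_smulTop.mpr ⟨b, rfl⟩

theorem smulTop_le_of_dvd {s t : R} (h : s ∣ t) : smulTop R t A ≤ smulTop R s A :=
  smul_mono (Ideal.span_singleton_le_span_singleton.mpr h) le_rfl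

theorem map_mkQ_smulTop (N : Submodule R A) (s : R) :
    (smulTop R s A).map N.mkQ = smulTop R s (A ⧸ N) := by
  rw [smulTop, smulTop, map_smul'', Submodule.map_top, range_mkQ]

theorem comap_mkQ_smulTop (N : Submodule R A) (s : R) :
    (smulTop R s (A ⧸ N)).comap N.mkQ = smulTop R s A ⊔ N := by
  rw [← map_mkQ_smulTop, comap_map_mkQ, sup_comm]

theorem sup_inf_smulTop_of_disjoint {N : Submodule R A} {s t : R}
    (hN : Disjoint N (smulTop R s A)) (h : s ∣ t) :
    (smulTop R t A ⊔ N) ⊓ smulTop R s A = smulTop R t A := by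
  rw [sup_inf_assoc_of_le N (smulTop_le_of_dvd h), hN.eq_bot, sup_bot_eq]

theorem disjoint_torsion'_smulTop {S : Submonoid R} {r : S}
    (hr : ∀ x ∈ torsion' R A S, (r : R) • x = 0) :
    Disjoint (torsion' R A S) (smulTop R r A) := by
  refine disjoint_def.mpr fun _ ⟨s, hs⟩ hx => ?_
  obtain ⟨b, rfl⟩ := mem_smulTop.mp hx
  exact hr b ⟨s * r, by rw [mul_smul]; exact hs⟩

end smulTop

section quotients

variable {R : Type} [CommRing R] {A B : Type} [AddCommGroup A] [Module R A]
  [AddCommGroup B] [Module R B]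

@[simp]
theorem transMap_mk (s t : R) (h : s ∣ t) (a : A) :
    transMap R A s t h (Submodule.Quotient.mk a) = Submodule.Quotient.mk a :=
  rfl

@[simp]
theorem quotMapF_mk (f : A →ₗ[R] B) (s : R) (a : A) :
    quotMapF R A B f s (Submodule.Quotient.mk a) = Submodule.Quotient.mk (f a) :=
  rfl

theorem ker_quotMapF_mkQ (N : Submodule R A) (s : R) :
    LinearMap.ker (quotMapF R A (A ⧸ N) N.mkQ s) = N.map (smulTop R s A).mkQ := by
  refine comap_injective_of_surjective (smulTop R s A).mkQ_surjective ?_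
  have hcomp : quotMapF R A (A ⧸ N) N.mkQ s ∘ₗ (smulTop R s A).mkQ
      = (smulTop R s (A ⧸ N)).mkQ ∘ₗ N.mkQ := rfl
  rw [comap_map_mkQ, ← LinearMap.ker_comp, hcomp, LinearMap.ker_comp, ker_mkQ, comap_mkQ_smulTop]

end quotients

section sCompletion

variable {R : Type} [CommRing R] {S : Submonoid R} {A B : Type} [AddCommGroup A] [Module R A]
  [AddCommGroup B] [Module R B]

theorem sCompletion_apply_eq_mk_of_dvd (x : sCompletion R S A) {s t : S} (h : (s : R) ∣ t)
    {a : A} (ha : x.1 t = Submodule.Quotient.mk a) : x.1 s = Submodule.Quotient.mk a := by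
  rw [← x.2 s t h, ha, transMap_mk]

@[simp]
theorem lamMap_apply_coe (a : A) (t : S) : (lamMap R S A a).1 t = Submodule.Quotient.mk a :=
  rfl

@[simp]
theorem sCompletionMap_apply_coe (f : A →ₗ[R] B) (x : sCompletion R S A) (t : S) :
    (sCompletionMap R S A B f x).1 t = quotMapF R A B f t (x.1 t) :=
  rfl

theorem sCompletionMap_lamMap (f : A →ₗ[R] B) (a : A) :
    sCompletionMap R S A B f (lamMap R S A a) = lamMap R S B (f a) :=
  rfl

theorem ker_lamMap_le (s : S) : LinearMap.ker (lamMap R S A) ≤ smulTop R s A := fun _ ha =>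
  (Submodule.Quotient.mk_eq_zero _).mp (congrArg (fun x : sCompletion R S A => x.1 s) ha)

theorem mem_map_lamMap_of_forall_mem {N : Submodule R A} {r : S}
    (hN : Disjoint N (smulTop R r A)) {x : sCompletion R S A}
    (hx : ∀ t : S, x.1 t ∈ N.map (smulTop R t A).mkQ) : x ∈ N.map (lamMap R S A) := by
  choose γ hγN hγ using fun t : S => hx (r * t)
  have hr : ∀ t, x.1 r = Submodule.Quotient.mk (γ t) := fun t =>
    sCompletion_apply_eq_mk_of_dvd x (dvd_mul_right _ _) (hγ t).symm
  have hconst : ∀ t, γ t = γ 1 := fun t => sub_eq_zero.mp <|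
    disjoint_def.mp hN _ (sub_mem (hγN t) (hγN 1))
      ((Submodule.Quotient.eq _).mp ((hr t).symm.trans (hr 1)))
  refine ⟨γ 1, hγN 1, Subtype.ext <| funext fun t => ?_⟩
  rw [lamMap_apply_coe, ← hconst t]
  exact (sCompletion_apply_eq_mk_of_dvd x (dvd_mul_left _ _) (hγ t).symm).symm

theorem mem_map_mkQ_of_mem_torsion' {x : sCompletion R S A}
    (hx : x ∈ torsion' R (sCompletion R S A) S) (t : S) :
    x.1 t ∈ (torsion' R A S).map (smulTop R t A).mkQ := by
  obtain ⟨s, hs⟩ := hx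
  obtain ⟨a, ha⟩ := mkQ_surjective _ (x.1 (s * t))
  have hsa : (s : R) • a ∈ smulTop R (s * t : S) A := by
    rw [← Submodule.Quotient.mk_eq_zero, Submodule.Quotient.mk_smul, ← mkQ_apply, ha]
    exact congrArg (fun y : sCompletion R S A => y.1 (s * t)) hs
  obtain ⟨c, hc⟩ := mem_smulTop.mp hsa
  rw [Submonoid.coe_mul] at hc
  refine ⟨a - (t : R) • c, ⟨s, ?_⟩, ?_⟩
  · show (s : R) • (a - (t : R) • c) = 0
    rw [smul_sub, smul_smul, hc, sub_self]
  · rw [sCompletion_apply_eq_mk_of_dvd x (dvd_mul_left _ _) ha.symm, mkQ_apply,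
      Submodule.Quotient.eq, sub_sub_cancel_left]
    exact neg_mem (smul_mem_smulTop _ _)

theorem ker_sCompletionMap_mkQ {N : Submodule R A} {r : S} (hN : Disjoint N (smulTop R r A)) :
    LinearMap.ker (sCompletionMap R S A (A ⧸ N) N.mkQ) = N.map (lamMap R S A) := by
  refine le_antisymm (fun x hx => mem_map_lamMap_of_forall_mem hN fun t => ?_) ?_
  · rw [← ker_quotMapF_mkQ]
    exact congrArg (fun y : sCompletion R S (A ⧸ N) => y.1 t) hx
  · rintro _ ⟨a, ha, rfl⟩
    rw [LinearMap.mem_ker, sCompletionMap_lamMap, mkQ_apply,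
      (Submodule.Quotient.mk_eq_zero N).mpr ha, map_zero]

theorem sCompletionMap_mkQ_surjective {N : Submodule R A} {r : S}
    (hN : Disjoint N (smulTop R r A)) :
    Function.Surjective (sCompletionMap R S A (A ⧸ N) N.mkQ) := by
  intro y
  choose b hb using fun u : S =>
    ((smulTop R _ (A ⧸ N)).mkQ_surjective.comp N.mkQ_surjective) (y.1 (r * u))
  have hb_sub : ∀ {u u' : S}, (u : R) ∣ u' →
      b u' - b u ∈ smulTop R (r * u : S) A ⊔ N := by
    intro u u' h
    rw [← comap_mkQ_smulTop, mem_comap, map_sub, ← Submodule.Quotient.eq]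
    exact (sCompletion_apply_eq_mk_of_dvd y (mul_dvd_mul_left (r : R) h) (hb u').symm).symm.trans
      (hb u).symm
  -- correct each `b u` by some `γ u ∈ N` so that it agrees with `b 1` modulo `rA`
  choose m hm γ hγN hsum using fun u : S => mem_sup.mp (hb_sub (u := 1) (u' := u) (one_dvd _))
  have hx_r : ∀ u, b u - γ u - b 1 ∈ smulTop R r A := fun u => by
    rw [sub_right_comm, ← hsum, add_sub_cancel_right]
    exact smulTop_le_of_dvd (dvd_mul_right _ _) (hm u)
  have hx_compat : ∀ {u u' : S}, (u : R) ∣ u' →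
      (b u' - γ u') - (b u - γ u) ∈ smulTop R u A := by
    intro u u' h
    have h_sup : (b u' - γ u') - (b u - γ u) ∈ smulTop R (r * u : S) A ⊔ N := by
      rw [sub_sub_sub_comm]
      exact sub_mem (hb_sub h) (mem_sup_right (sub_mem (hγN u') (hγN u)))
    have h_r : (b u' - γ u') - (b u - γ u) ∈ smulTop R r A := by
      rw [← sub_sub_sub_cancel_right _ _ (b 1)]
      exact sub_mem (hx_r u') (hx_r u)
    have h_inf := mem_inf.mpr ⟨h_sup, h_r⟩
    rw [sup_inf_smulTop_of_disjoint (t := ((r * u : S) : R)) hN (dvd_mul_right _ _)] at h_inf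
    exact smulTop_le_of_dvd (dvd_mul_left _ _) h_inf
  refine ⟨⟨fun u => Submodule.Quotient.mk (b u - γ u), fun u u' h => ?_⟩,
    Subtype.ext <| funext fun u => ?_⟩
  · rw [transMap_mk, Submodule.Quotient.eq]
    exact hx_compat h
  · rw [sCompletionMap_apply_coe, quotMapF_mk, map_sub,
      show N.mkQ (γ u) = 0 from (Submodule.Quotient.mk_eq_zero N).mpr (hγN u), sub_zero]
    exact (sCompletion_apply_eq_mk_of_dvd y (dvd_mul_left _ _) (hb u).symm).symm

end sCompletion

/-- For an `R`-module `B` with bounded S-torsion: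
(d) `λ_{S,B}` restricts to an isomorphism `Γ_S(B) ≅ Γ_S(Λ_S(B))`;
(e) there is a short exact sequence
`0 → Γ_S(B) → Λ_S(B) → Λ_S(B/Γ_S(B)) → 0`. -/
theorem sCompletion_bounded_torsion
    (R : Type) [CommRing R] (S : Submonoid R)
    (B : Type) [AddCommGroup B] [Module R B]
    (hbdd : ∃ r : S, ∀ x ∈ Submodule.torsion' R B S, (r : R) • x = 0) :
    -- (d): `λ_{S,B}` is injective on `Γ_S(B)` and maps it onto `Γ_S(Λ_S(B))`
    ((∀ x ∈ Submodule.torsion' R B S, lamMap R S B x = 0 → x = 0) ∧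
      Submodule.map (lamMap R S B) (Submodule.torsion' R B S)
        = Submodule.torsion' R (sCompletion R S B) S) ∧
    -- (e): `Λ_S(B) → Λ_S(B/Γ_S(B))` is surjective with kernel `Γ_S(B) ⊆ Λ_S(B)`
    (Function.Surjective
        (sCompletionMap R S B (B ⧸ Submodule.torsion' R B S)
          (Submodule.torsion' R B S).mkQ) ∧
      LinearMap.ker
          (sCompletionMap R S B (B ⧸ Submodule.torsion' R B S)
            (Submodule.torsion' R B S).mkQ)
        = Submodule.map (lamMap R S B) (Submodule.torsion' R B S)) := by
  obtain ⟨r, hr⟩ := hbdd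
  have hΓ := disjoint_torsion'_smulTop hr
  refine ⟨⟨fun x hx => disjoint_def.mp (hΓ.mono_right (ker_lamMap_le r)) x hx, ?_⟩,
    sCompletionMap_mkQ_surjective hΓ, ker_sCompletionMap_mkQ hΓ⟩
  exact le_antisymm (map_torsion'_le S _) fun x hx =>
    mem_map_lamMap_of_forall_mem hΓ (mem_map_mkQ_of_mem_torsion' hx)
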